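/- arXiv:1707.03561 — 9 statements merged into one kernel-verified Lean document; each statement's English description precedes it below -/
import Mathlib

section
/- Let a, φ, ω, f, c₁, c₃ be real numbers. If the complex equation 10i·a⁵ω⁵ + 3i·a³c₃ω³ + i·a·c₁·ω − a·ω² + a = f·e^{−iφ} holds (where i is the imaginary unit), then g(a², ω², f², c₁, c₃) = 0. -/
/-- The harmonic-balance frequency-response function
`g(A, Ω, F, c₁, c₃)` of the oscillator `ẍ + x + c₁ẋ + c₃ẋ³ + ẋ⁵ = 2f cos(ωt)`. -/
noncomputable def g (A Ω F c1 c3 : ℝ) : ℝ :=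
  100 * A ^ 5 * Ω ^ 5 + 60 * A ^ 4 * c3 * Ω ^ 4
    + A ^ 3 * Ω ^ 3 * (20 * c1 + 9 * c3 ^ 2) + 6 * A ^ 2 * c1 * c3 * Ω ^ 2
    + A * ((c1 ^ 2 - 2) * Ω + Ω ^ 2 + 1) - F

/-- if the complex harmonic-balance equation
`10i a⁵ω⁵ + 3i a³c₃ω³ + i a c₁ ω − a ω² + a = f e^{−iφ}` holds,
then `g(a², ω², f², c₁, c₃) = 0`. -/
theorem harmonic_balance_modulus (a φ ω f c1 c3 : ℝ)
    (h : 10 * Complex.I * (a : ℂ) ^ 5 * (ω : ℂ) ^ 5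
        + 3 * Complex.I * (a : ℂ) ^ 3 * (c3 : ℂ) * (ω : ℂ) ^ 3
        + Complex.I * (a : ℂ) * (c1 : ℂ) * (ω : ℂ)
        - (a : ℂ) * (ω : ℂ) ^ 2 + (a : ℂ)
        = (f : ℂ) * Complex.exp (-Complex.I * (φ : ℂ))) :
    g (a ^ 2) (ω ^ 2) (f ^ 2) c1 c3 = 0 := by
  rw [show -Complex.I * (φ : ℂ) = ((-φ : ℝ) : ℂ) * Complex.I by push_cast; ring,
    Complex.exp_mul_I] at h
  rw [Complex.ext_iff] at h
  obtain ⟨hre, him⟩ := h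
  simp [Complex.add_re, Complex.add_im, Complex.mul_re, Complex.mul_im, ← Complex.ofReal_pow,
    Complex.cos_ofReal_re, Complex.sin_ofReal_re] at hre him
  have key : (-(a * ω ^ 2) + a) ^ 2
      + (10 * a ^ 5 * ω ^ 5 + 3 * a ^ 3 * c3 * ω ^ 3 + a * c1 * ω) ^ 2 = f ^ 2 := by
    rw [hre, him]
    nlinarith [Real.sin_sq_add_cos_sq φ]
  unfold g
  linear_combination key
end

section
/- Let c₁ > 0 and c₃ be real with 9c₃² ≥ 40c₁. Set A₁ = (−3c₃ − √(9c₃² − 40c₁))/20 and A₂ = (−3c₃ + √(9c₃² − 40c₁))/20. Then at each of the points (A, Ω, F) = (A₁, 1, 0) and (A₂, 1, 0) one has g = 0, ∂g/∂A = 0, and ∂g/∂Ω = 0. -/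
lemma deriv_poly5 (a b c d e f x : ℝ) :
    deriv (fun t : ℝ => a*t^5 + b*t^4 + c*t^3 + d*t^2 + e*t + f) x
      = 5*a*x^4 + 4*b*x^3 + 3*c*x^2 + 2*d*x + e := by
  have h : HasDerivAt (fun t : ℝ => a*t^5 + b*t^4 + c*t^3 + d*t^2 + e*t + f)
      (5*a*x^4 + 4*b*x^3 + 3*c*x^2 + 2*d*x + e) x := by
    have h5 := (hasDerivAt_pow 5 x).const_mul a
    have h4 := (hasDerivAt_pow 4 x).const_mul b
    have h3 := (hasDerivAt_pow 3 x).const_mul c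
    have h2 := (hasDerivAt_pow 2 x).const_mul d
    have h1 := (hasDerivAt_id x).const_mul e
    have := ((((h5.add h4).add h3).add h2).add h1).add_const f
    refine this.congr_deriv ?_
    push_cast
    ring
  exact h.deriv

/-- the zero-forcing singular points `S₁ = (A₁, 1, 0)` and
`S₂ = (A₂, 1, 0)` satisfy `g = ∂g/∂A = ∂g/∂Ω = 0`. -/
theorem singular_points_S1_S2 (c1 c3 : ℝ) (hc1 : 0 < c1)
    (hdisc : 9 * c3 ^ 2 ≥ 40 * c1)
    (A1 A2 : ℝ)
    (hA1 : A1 = (-3 * c3 - Real.sqrt (9 * c3 ^ 2 - 40 * c1)) / 20)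
    (hA2 : A2 = (-3 * c3 + Real.sqrt (9 * c3 ^ 2 - 40 * c1)) / 20) :
    (g A1 1 0 c1 c3 = 0 ∧
      deriv (fun A => g A 1 0 c1 c3) A1 = 0 ∧
      deriv (fun Ω => g A1 Ω 0 c1 c3) 1 = 0) ∧
    (g A2 1 0 c1 c3 = 0 ∧
      deriv (fun A => g A 1 0 c1 c3) A2 = 0 ∧
      deriv (fun Ω => g A2 Ω 0 c1 c3) 1 = 0) := by
  have hs : Real.sqrt (9 * c3 ^ 2 - 40 * c1) ^ 2 = 9 * c3 ^ 2 - 40 * c1 :=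
    Real.sq_sqrt (by linarith)
  have hq1 : 10 * A1 ^ 2 + 3 * c3 * A1 + c1 = 0 := by
    have hs' : Real.sqrt (c3 ^ 2 * 9 - 40 * c1) ^ 2 = c3 ^ 2 * 9 - 40 * c1 := by
      rw [show c3 ^ 2 * 9 - 40 * c1 = 9 * c3 ^ 2 - 40 * c1 by ring]; exact hs
    rw [hA1]; field_simp; linear_combination (10:ℝ) * hs'
  have hq2 : 10 * A2 ^ 2 + 3 * c3 * A2 + c1 = 0 := by
    have hs' : Real.sqrt (c3 ^ 2 * 9 - 40 * c1) ^ 2 = c3 ^ 2 * 9 - 40 * c1 := by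
      rw [show c3 ^ 2 * 9 - 40 * c1 = 9 * c3 ^ 2 - 40 * c1 by ring]; exact hs
    rw [hA2]; field_simp; linear_combination (10:ℝ) * hs'
  have hfA : (fun A => g A 1 0 c1 c3)
      = fun t : ℝ => 100*t^5 + (60*c3)*t^4 + (20*c1+9*c3^2)*t^3
          + (6*c1*c3)*t^2 + c1^2*t + 0 := by
    funext t; unfold g; ring
  have hdA : ∀ x : ℝ, deriv (fun A => g A 1 0 c1 c3) x
      = 5*100*x^4 + 4*(60*c3)*x^3 + 3*(20*c1+9*c3^2)*x^2 + 2*(6*c1*c3)*x + c1^2 := by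
    intro x; rw [hfA]; exact deriv_poly5 _ _ _ _ _ _ x
  have hfΩ : ∀ A : ℝ, (fun Ω => g A Ω 0 c1 c3)
      = fun t : ℝ => (100*A^5)*t^5 + (60*A^4*c3)*t^4 + (A^3*(20*c1+9*c3^2))*t^3
          + (6*A^2*c1*c3 + A)*t^2 + (A*(c1^2-2))*t + A := by
    intro A; funext t; unfold g; ring
  have hdΩ : ∀ A : ℝ, deriv (fun Ω => g A Ω 0 c1 c3) 1
      = 5*(100*A^5) + 4*(60*A^4*c3) + 3*(A^3*(20*c1+9*c3^2))
          + 2*(6*A^2*c1*c3 + A) + A*(c1^2-2) := by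
    intro A; rw [hfΩ A]
    have := deriv_poly5 (100*A^5) (60*A^4*c3) (A^3*(20*c1+9*c3^2))
      (6*A^2*c1*c3 + A) (A*(c1^2-2)) A 1
    rw [this]; ring
  refine ⟨⟨?_, ?_, ?_⟩, ⟨?_, ?_, ?_⟩⟩
  · unfold g
    linear_combination (A1 * (10 * A1 ^ 2 + 3 * c3 * A1 + c1)) * hq1
  · rw [hdA]
    linear_combination ((10*A1^2+3*c3*A1+c1) + 2*A1*(20*A1+3*c3)) * hq1
  · rw [hdΩ]
    linear_combination (A1*(50*A1^2+9*c3*A1+c1)) * hq1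
  · unfold g
    linear_combination (A2 * (10 * A2 ^ 2 + 3 * c3 * A2 + c1)) * hq2
  · rw [hdA]
    linear_combination ((10*A2^2+3*c3*A2+c1) + 2*A2*(20*A2+3*c3)) * hq2
  · rw [hdΩ]
    linear_combination (A2*(50*A2^2+9*c3*A2+c1)) * hq2
end

section
/- Let c₁ > 0 and c₃ be real with 81c₃² ≥ 200c₁. Set A₃ = (−9c₃ − √(81c₃² − 200c₁))/100, A₄ = (−9c₃ + √(81c₃² − 200c₁))/100, F₃ = (−9c₃ − √(81c₃² − 200c₁))·(200c₁ − 3c₃(√(81c₃² − 200c₁) + 9c₃))²/6250000, and F₄ = (−9c₃ + √(81c₃² − 200c₁))·(200c₁ + 3c₃(√(81c₃² − 200c₁) − 9c₃))²/6250000. Then at each of the points (A, Ω, F) = (A₃, 1, F₃) and (A₄, 1, F₄) one has g = 0, ∂g/∂A = 0, and ∂g/∂Ω = 0. -/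
lemma deriv_g_A (Ω F c1 c3 A : ℝ) :
    deriv (fun A => g A Ω F c1 c3) A =
      500 * A ^ 4 * Ω ^ 5 + 240 * A ^ 3 * c3 * Ω ^ 4
        + 3 * A ^ 2 * Ω ^ 3 * (20 * c1 + 9 * c3 ^ 2) + 12 * A * c1 * c3 * Ω ^ 2
        + ((c1 ^ 2 - 2) * Ω + Ω ^ 2 + 1) := by
  have key : (fun A : ℝ => g A Ω F c1 c3)
      = fun x : ℝ => 100 * Ω ^ 5 * x ^ 5 + 60 * c3 * Ω ^ 4 * x ^ 4
          + Ω ^ 3 * (20 * c1 + 9 * c3 ^ 2) * x ^ 3 + 6 * c1 * c3 * Ω ^ 2 * x ^ 2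
          + ((c1 ^ 2 - 2) * Ω + Ω ^ 2 + 1) * x - F := by
    funext x; simp only [g]; ring
  rw [key]
  have h := ((((((hasDerivAt_pow 5 A).const_mul (100 * Ω ^ 5)).add
      ((hasDerivAt_pow 4 A).const_mul (60 * c3 * Ω ^ 4))).add
      ((hasDerivAt_pow 3 A).const_mul (Ω ^ 3 * (20 * c1 + 9 * c3 ^ 2)))).add
      ((hasDerivAt_pow 2 A).const_mul (6 * c1 * c3 * Ω ^ 2))).add
      ((hasDerivAt_id A).const_mul ((c1 ^ 2 - 2) * Ω + Ω ^ 2 + 1))).sub_const F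
  simp only [id_eq, Pi.add_apply] at h
  rw [h.deriv]; push_cast; ring

lemma deriv_g_Ω (A F c1 c3 Ω : ℝ) :
    deriv (fun Ω => g A Ω F c1 c3) Ω =
      500 * A ^ 5 * Ω ^ 4 + 240 * A ^ 4 * c3 * Ω ^ 3
        + 3 * A ^ 3 * Ω ^ 2 * (20 * c1 + 9 * c3 ^ 2) + 12 * A ^ 2 * c1 * c3 * Ω
        + A * (c1 ^ 2 - 2) + 2 * A * Ω := by
  have key : (fun Ω : ℝ => g A Ω F c1 c3)
      = fun x : ℝ => 100 * A ^ 5 * x ^ 5 + 60 * A ^ 4 * c3 * x ^ 4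
          + A ^ 3 * (20 * c1 + 9 * c3 ^ 2) * x ^ 3 + (6 * A ^ 2 * c1 * c3 + A) * x ^ 2
          + A * (c1 ^ 2 - 2) * x + (A - F) := by
    funext x; simp only [g]; ring
  rw [key]
  have h := ((((((hasDerivAt_pow 5 Ω).const_mul (100 * A ^ 5)).add
      ((hasDerivAt_pow 4 Ω).const_mul (60 * A ^ 4 * c3))).add
      ((hasDerivAt_pow 3 Ω).const_mul (A ^ 3 * (20 * c1 + 9 * c3 ^ 2)))).add
      ((hasDerivAt_pow 2 Ω).const_mul (6 * A ^ 2 * c1 * c3 + A))).add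
      ((hasDerivAt_id Ω).const_mul (A * (c1 ^ 2 - 2)))).add_const (A - F)
  simp only [id_eq, Pi.add_apply] at h
  rw [h.deriv]; push_cast; ring

/-- the singular points `S₃ = (A₃, 1, F₃)` and `S₄ = (A₄, 1, F₄)`
satisfy `g = ∂g/∂A = ∂g/∂Ω = 0`. -/
theorem singular_points_S3_S4 (c1 c3 : ℝ) (hc1 : 0 < c1)
    (hdisc : 81 * c3 ^ 2 ≥ 200 * c1)
    (A3 A4 F3 F4 : ℝ)
    (hA3 : A3 = (-9 * c3 - Real.sqrt (81 * c3 ^ 2 - 200 * c1)) / 100)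
    (hA4 : A4 = (-9 * c3 + Real.sqrt (81 * c3 ^ 2 - 200 * c1)) / 100)
    (hF3 : F3 = (-9 * c3 - Real.sqrt (81 * c3 ^ 2 - 200 * c1))
      * (200 * c1 - 3 * c3 * (Real.sqrt (81 * c3 ^ 2 - 200 * c1) + 9 * c3)) ^ 2
      / 6250000)
    (hF4 : F4 = (-9 * c3 + Real.sqrt (81 * c3 ^ 2 - 200 * c1))
      * (200 * c1 + 3 * c3 * (Real.sqrt (81 * c3 ^ 2 - 200 * c1) - 9 * c3)) ^ 2
      / 6250000) :
    (g A3 1 F3 c1 c3 = 0 ∧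
      deriv (fun A => g A 1 F3 c1 c3) A3 = 0 ∧
      deriv (fun Ω => g A3 Ω F3 c1 c3) 1 = 0) ∧
    (g A4 1 F4 c1 c3 = 0 ∧
      deriv (fun A => g A 1 F4 c1 c3) A4 = 0 ∧
      deriv (fun Ω => g A4 Ω F4 c1 c3) 1 = 0) := by
  set s := Real.sqrt (81 * c3 ^ 2 - 200 * c1) with hsdef
  have hs : s ^ 2 = 81 * c3 ^ 2 - 200 * c1 :=
    Real.sq_sqrt (by linarith)
  have hkey3 : 50 * A3 ^ 2 + 9 * c3 * A3 + c1 = 0 := by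
    rw [hA3]; linear_combination hs / 200
  have hkey4 : 50 * A4 ^ 2 + 9 * c3 * A4 + c1 = 0 := by
    rw [hA4]; linear_combination hs / 200
  have hF3' : F3 = A3 * (200 * c1 + 300 * c3 * A3) ^ 2 / 62500 := by
    rw [hF3, hA3]; ring
  have hF4' : F4 = A4 * (200 * c1 + 300 * c3 * A4) ^ 2 / 62500 := by
    rw [hF4, hA4]; ring
  refine ⟨⟨?_, ?_, ?_⟩, ⟨?_, ?_, ?_⟩⟩
  · rw [hF3', g]
    linear_combination (2 * A3 ^ 3 + 21 / 25 * c3 * A3 ^ 2 + 9 / 25 * c1 * A3) * hkey3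
  · rw [deriv_g_A]
    linear_combination (10 * A3 ^ 2 + 3 * c3 * A3 + c1) * hkey3
  · rw [deriv_g_Ω]
    linear_combination (A3 * (10 * A3 ^ 2 + 3 * c3 * A3 + c1)) * hkey3
  · rw [hF4', g]
    linear_combination (2 * A4 ^ 3 + 21 / 25 * c3 * A4 ^ 2 + 9 / 25 * c1 * A4) * hkey4
  · rw [deriv_g_A]
    linear_combination (10 * A4 ^ 2 + 3 * c3 * A4 + c1) * hkey4
  · rw [deriv_g_Ω]
    linear_combination (A4 * (10 * A4 ^ 2 + 3 * c3 * A4 + c1)) * hkey4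
end

section
/- For all real A, c₁, c₃ and F, the partial derivative of g with respect to A evaluated at Ω = 1 factors as ∂g/∂A(A, 1, F, c₁, c₃) = (10A² + 3c₃A + c₁)·(50A² + 9c₃A + c₁). Consequently, if c₁ > 0, then for A > 0 one has ∂g/∂A(A, 1, F, c₁, c₃) = 0 if and only if either 9c₃² ≥ 40c₁ and A ∈ {(−3c₃ − √(9c₃² − 40c₁))/20, (−3c₃ + √(9c₃² − 40c₁))/20}, or 81c₃² ≥ 200c₁ and A ∈ {(−9c₃ − √(81c₃² − 200c₁))/100, (−9c₃ + √(81c₃² − 200c₁))/100}. -/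
lemma quad_iff (a b c x : ℝ) (ha : 0 < a) :
    a * x ^ 2 + b * x + c = 0 ↔
      b ^ 2 - 4 * a * c ≥ 0 ∧
        (x = (-b - Real.sqrt (b ^ 2 - 4 * a * c)) / (2 * a) ∨
         x = (-b + Real.sqrt (b ^ 2 - 4 * a * c)) / (2 * a)) := by
  constructor
  · intro h
    have hd : b ^ 2 - 4 * a * c = (2 * a * x + b) ^ 2 := by nlinarith
    have hd0 : (0:ℝ) ≤ b ^ 2 - 4 * a * c := hd ▸ sq_nonneg _
    have hs : discrim a b c =
        Real.sqrt (b ^ 2 - 4 * a * c) * Real.sqrt (b ^ 2 - 4 * a * c) := by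
      rw [discrim, Real.mul_self_sqrt hd0]
    have h' : a * (x * x) + b * x + c = 0 := by nlinarith
    rcases (quadratic_eq_zero_iff ha.ne' hs x).mp h' with h1 | h1
    · exact ⟨hd0, Or.inr h1⟩
    · exact ⟨hd0, Or.inl h1⟩
  · rintro ⟨hd0, hx⟩
    have hs : discrim a b c =
        Real.sqrt (b ^ 2 - 4 * a * c) * Real.sqrt (b ^ 2 - 4 * a * c) := by
      rw [discrim, Real.mul_self_sqrt hd0]
    have h' : a * (x * x) + b * x + c = 0 :=
      (quadratic_eq_zero_iff ha.ne' hs x).mpr (hx.symm)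
    nlinarith [h']

lemma deriv_g (A F c1 c3 : ℝ) :
    deriv (fun A' => g A' 1 F c1 c3) A
      = (10 * A ^ 2 + 3 * c3 * A + c1) * (50 * A ^ 2 + 9 * c3 * A + c1) := by
  have heq : (fun A' => g A' 1 F c1 c3)
      = fun x : ℝ => 100 * x ^ 5 + (60 * c3) * x ^ 4 + (20 * c1 + 9 * c3 ^ 2) * x ^ 3
          + (6 * c1 * c3) * x ^ 2 + c1 ^ 2 * x ^ 1 - F := by
    funext x; simp only [g]; ring
  have h : HasDerivAt (fun x : ℝ => 100 * x ^ 5 + (60 * c3) * x ^ 4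
      + (20 * c1 + 9 * c3 ^ 2) * x ^ 3 + (6 * c1 * c3) * x ^ 2 + c1 ^ 2 * x ^ 1 - F)
      (100 * ((5:ℕ) * A ^ (5-1)) + (60 * c3) * ((4:ℕ) * A ^ (4-1))
        + (20 * c1 + 9 * c3 ^ 2) * ((3:ℕ) * A ^ (3-1)) + (6 * c1 * c3) * ((2:ℕ) * A ^ (2-1))
        + c1 ^ 2 * ((1:ℕ) * A ^ (1-1))) A := by
    exact ((((((hasDerivAt_pow 5 A).const_mul 100).add
      ((hasDerivAt_pow 4 A).const_mul (60 * c3))).add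
      ((hasDerivAt_pow 3 A).const_mul (20 * c1 + 9 * c3 ^ 2))).add
      ((hasDerivAt_pow 2 A).const_mul (6 * c1 * c3))).add
      ((hasDerivAt_pow 1 A).const_mul (c1 ^ 2))).sub_const F
  rw [heq, h.deriv]
  norm_num
  ring

/-- at `Ω = 1` the derivative `∂g/∂A` factors as
`(10A² + 3c₃A + c₁)(50A² + 9c₃A + c₁)`, and hence for `c₁ > 0`, `A > 0` its
positive zeros are exactly the roots of the two quadratic factors. -/
theorem dgdA_factorization :
    (∀ A F c1 c3 : ℝ,
      deriv (fun A' => g A' 1 F c1 c3) A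
        = (10 * A ^ 2 + 3 * c3 * A + c1) * (50 * A ^ 2 + 9 * c3 * A + c1)) ∧
    ∀ A F c1 c3 : ℝ, 0 < c1 → 0 < A →
      (deriv (fun A' => g A' 1 F c1 c3) A = 0 ↔
        (9 * c3 ^ 2 ≥ 40 * c1 ∧
          (A = (-3 * c3 - Real.sqrt (9 * c3 ^ 2 - 40 * c1)) / 20 ∨
           A = (-3 * c3 + Real.sqrt (9 * c3 ^ 2 - 40 * c1)) / 20)) ∨
        (81 * c3 ^ 2 ≥ 200 * c1 ∧
          (A = (-9 * c3 - Real.sqrt (81 * c3 ^ 2 - 200 * c1)) / 100 ∨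
           A = (-9 * c3 + Real.sqrt (81 * c3 ^ 2 - 200 * c1)) / 100))) := by
  refine ⟨deriv_g, ?_⟩
  intro A F c1 c3 hc1 hA
  rw [deriv_g, mul_eq_zero]
  have h1 := quad_iff 10 (3 * c3) c1 A (by norm_num)
  have h2 := quad_iff 50 (9 * c3) c1 A (by norm_num)
  constructor
  · rintro (h | h)
    · left
      obtain ⟨hd, hx⟩ := h1.mp (by linarith [h])
      refine ⟨by nlinarith [hd], ?_⟩
      have e : (3 * c3) ^ 2 - 4 * 10 * c1 = 9 * c3 ^ 2 - 40 * c1 := by ring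
      rw [e] at hx
      rcases hx with hx | hx
      · left; rw [hx]; ring_nf
      · right; rw [hx]; ring_nf
    · right
      obtain ⟨hd, hx⟩ := h2.mp (by linarith [h])
      refine ⟨by nlinarith [hd], ?_⟩
      have e : (9 * c3) ^ 2 - 4 * 50 * c1 = 81 * c3 ^ 2 - 200 * c1 := by ring
      rw [e] at hx
      rcases hx with hx | hx
      · left; rw [hx]; ring_nf
      · right; rw [hx]; ring_nf
  · rintro (⟨hd, hx⟩ | ⟨hd, hx⟩)
    · left
      have e : (3 * c3) ^ 2 - 4 * 10 * c1 = 9 * c3 ^ 2 - 40 * c1 := by ring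
      have := h1.mpr ⟨by rw [e]; linarith, by
        rw [e]
        rcases hx with hx | hx
        · left; rw [hx]; ring_nf
        · right; rw [hx]; ring_nf⟩
      linarith [this]
    · right
      have e : (9 * c3) ^ 2 - 4 * 50 * c1 = 81 * c3 ^ 2 - 200 * c1 := by ring
      have := h2.mpr ⟨by rw [e]; linarith, by
        rw [e]
        rcases hx with hx | hx
        · left; rw [hx]; ring_nf
        · right; rw [hx]; ring_nf⟩
      linarith [this]
end

section
/- Let c₁ > 0 and c₃ be real. Then the following are equivalent: (i) 81c₃² ≥ 200c₁ and all four of A₃ = (−9c₃ − √(81c₃² − 200c₁))/100, A₄ = (−9c₃ + √(81c₃² − 200c₁))/100, F₃ = (−9c₃ − √(81c₃² − 200c₁))·(200c₁ − 3c₃(√(81c₃² − 200c₁) + 9c₃))²/6250000, and F₄ = (−9c₃ + √(81c₃² − 200c₁))·(200c₁ + 3c₃(√(81c₃² − 200c₁) − 9c₃))²/6250000 are nonnegative; (ii) c₃ ≤ c₃₂ := −(10/9)·√(2c₁). -/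
/-- the singular coordinates `A₃`, `A₄`, `F₃`, `F₄` are real and
all nonnegative if and only if `c₃ ≤ c₃₂ = −(10/9)√(2c₁)`. -/
theorem S3_S4_existence (c1 c3 : ℝ) (hc1 : 0 < c1) :
    (81 * c3 ^ 2 ≥ 200 * c1 ∧
      0 ≤ (-9 * c3 - Real.sqrt (81 * c3 ^ 2 - 200 * c1)) / 100 ∧
      0 ≤ (-9 * c3 + Real.sqrt (81 * c3 ^ 2 - 200 * c1)) / 100 ∧
      0 ≤ (-9 * c3 - Real.sqrt (81 * c3 ^ 2 - 200 * c1))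
          * (200 * c1 - 3 * c3 * (Real.sqrt (81 * c3 ^ 2 - 200 * c1) + 9 * c3)) ^ 2
          / 6250000 ∧
      0 ≤ (-9 * c3 + Real.sqrt (81 * c3 ^ 2 - 200 * c1))
          * (200 * c1 + 3 * c3 * (Real.sqrt (81 * c3 ^ 2 - 200 * c1) - 9 * c3)) ^ 2
          / 6250000) ↔
    c3 ≤ -(10 / 9) * Real.sqrt (2 * c1) := by
  set t := Real.sqrt (2 * c1) with ht
  have ht0 : 0 < t := Real.sqrt_pos.mpr (by linarith)
  have ht2 : t ^ 2 = 2 * c1 := Real.sq_sqrt (by linarith)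
  constructor
  · rintro ⟨h1, h2, h3, -, -⟩
    have hs0 : 0 ≤ Real.sqrt (81 * c3 ^ 2 - 200 * c1) := Real.sqrt_nonneg _
    have hc3 : c3 ≤ 0 := by nlinarith
    nlinarith [sq_nonneg (9 * c3 + 10 * t)]
  · intro h
    have hc3 : c3 < 0 := by nlinarith
    have h1 : 81 * c3 ^ 2 ≥ 200 * c1 := by nlinarith
    set s := Real.sqrt (81 * c3 ^ 2 - 200 * c1) with hs
    have hs0 : 0 ≤ s := Real.sqrt_nonneg _
    have hs2 : s ^ 2 = 81 * c3 ^ 2 - 200 * c1 := Real.sq_sqrt (by linarith)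
    have hsle : s ≤ -9 * c3 := by nlinarith
    refine ⟨h1, by linarith, by linarith, ?_, ?_⟩
    · apply div_nonneg _ (by norm_num)
      exact mul_nonneg (by linarith) (sq_nonneg _)
    · apply div_nonneg _ (by norm_num)
      exact mul_nonneg (by linarith) (sq_nonneg _)
end

section
/- Let c₁ > 0 and c₃ < c₃₁ = −(2/3)·√(10c₁), and let A₁ = (−3c₃ − √(9c₃² − 40c₁))/20 and A₂ = (−3c₃ + √(9c₃² − 40c₁))/20. Then at each of the points (A, Ω) = (A₁, 1) and (A₂, 1) one has ∂²g/∂A² ≠ 0 and det(d²g) = (∂²g/∂A²)(∂²g/∂Ω²) − (∂²g/∂A∂Ω)² > 0; i.e., S₁ and S₂ satisfy the nondegeneracy conditions of isola singularities. -/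
/-- `∂²g/∂A²` at `(A₀, Ω₀)`. -/
noncomputable def gAA (A0 Ω0 F c1 c3 : ℝ) : ℝ :=
  deriv (deriv (fun A => g A Ω0 F c1 c3)) A0

/-- `∂²g/∂Ω²` at `(A₀, Ω₀)`. -/
noncomputable def gΩΩ (A0 Ω0 F c1 c3 : ℝ) : ℝ :=
  deriv (deriv (fun Ω => g A0 Ω F c1 c3)) Ω0

/-- mixed derivative `∂²g/∂A∂Ω` at `(A₀, Ω₀)`. -/
noncomputable def gAΩ (A0 Ω0 F c1 c3 : ℝ) : ℝ :=
  deriv (fun Ω => deriv (fun A => g A Ω F c1 c3) A0) Ω0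

/-- determinant of the Hessian of `g` in the variables `(A, Ω)`. -/
noncomputable def detHess (A0 Ω0 F c1 c3 : ℝ) : ℝ :=
  gAA A0 Ω0 F c1 c3 * gΩΩ A0 Ω0 F c1 c3 - (gAΩ A0 Ω0 F c1 c3) ^ 2

/- ### Auxiliary derivative computations -/

lemma quintic_hasDerivAt (a b c d e f x : ℝ) :
    HasDerivAt (fun x : ℝ => a*x^5+b*x^4+c*x^3+d*x^2+e*x+f)
      (5*a*x^4+4*b*x^3+3*c*x^2+2*d*x+e) x := by
  have H := ((((((hasDerivAt_pow 5 x).const_mul a).add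
      ((hasDerivAt_pow 4 x).const_mul b)).add
      ((hasDerivAt_pow 3 x).const_mul c)).add
      ((hasDerivAt_pow 2 x).const_mul d)).add
      ((hasDerivAt_id x).const_mul e)).add_const f
  exact H.congr_deriv (by norm_num; ring)

lemma quintic_deriv1 (a b c d e f x : ℝ) :
    deriv (fun x : ℝ => a*x^5+b*x^4+c*x^3+d*x^2+e*x+f) x
      = 5*a*x^4+4*b*x^3+3*c*x^2+2*d*x+e :=
  (quintic_hasDerivAt a b c d e f x).deriv

lemma quintic_deriv2 (a b c d e f x : ℝ) :
    deriv (deriv (fun x : ℝ => a*x^5+b*x^4+c*x^3+d*x^2+e*x+f)) x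
      = 20*a*x^3+12*b*x^2+6*c*x+2*d := by
  have h : deriv (fun x : ℝ => a*x^5+b*x^4+c*x^3+d*x^2+e*x+f)
      = fun x : ℝ => (0:ℝ)*x^5+(5*a)*x^4+(4*b)*x^3+(3*c)*x^2+(2*d)*x+e := by
    funext y
    rw [quintic_deriv1]; ring
  rw [h, quintic_deriv1]
  ring

lemma g_as_quintic_A (Ω F c1 c3 : ℝ) :
    (fun A => g A Ω F c1 c3)
      = fun A : ℝ => (100*Ω^5)*A^5 + (60*c3*Ω^4)*A^4 + (Ω^3*(20*c1+9*c3^2))*A^3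
          + (6*c1*c3*Ω^2)*A^2 + ((c1^2-2)*Ω+Ω^2+1)*A + (-F) := by
  funext A
  simp only [g]
  ring

lemma g_as_quintic_Ω (A0 F c1 c3 : ℝ) :
    (fun Ω => g A0 Ω F c1 c3)
      = fun Ω : ℝ => (100*A0^5)*Ω^5 + (60*A0^4*c3)*Ω^4 + (A0^3*(20*c1+9*c3^2))*Ω^3
          + (6*A0^2*c1*c3 + A0)*Ω^2 + (A0*(c1^2-2))*Ω + (A0 - F) := by
  funext Ω
  simp only [g]
  ring

lemma gAA_eq (A0 Ω0 F c1 c3 : ℝ) :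
    gAA A0 Ω0 F c1 c3
      = 2000*Ω0^5*A0^3 + 720*c3*Ω0^4*A0^2 + 6*Ω0^3*(20*c1+9*c3^2)*A0
          + 12*c1*c3*Ω0^2 := by
  unfold gAA
  rw [g_as_quintic_A, quintic_deriv2]
  ring

lemma gΩΩ_eq (A0 Ω0 F c1 c3 : ℝ) :
    gΩΩ A0 Ω0 F c1 c3
      = 2000*A0^5*Ω0^3 + 720*A0^4*c3*Ω0^2 + 6*A0^3*(20*c1+9*c3^2)*Ω0
          + 12*A0^2*c1*c3 + 2*A0 := by
  unfold gΩΩ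
  rw [g_as_quintic_Ω, quintic_deriv2]
  ring

lemma gAΩ_eq (A0 Ω0 F c1 c3 : ℝ) :
    gAΩ A0 Ω0 F c1 c3
      = 2500*A0^4*Ω0^4 + 960*A0^3*c3*Ω0^3 + 9*A0^2*(20*c1+9*c3^2)*Ω0^2
          + (24*A0*c1*c3 + 2)*Ω0 + (c1^2-2) := by
  unfold gAΩ
  have h : (fun Ω => deriv (fun A => g A Ω F c1 c3) A0)
      = fun Ω : ℝ => (500*A0^4)*Ω^5 + (240*A0^3*c3)*Ω^4 + (3*A0^2*(20*c1+9*c3^2))*Ω^3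
          + (12*A0*c1*c3 + 1)*Ω^2 + (c1^2-2)*Ω + (1:ℝ) := by
    funext Ω
    rw [g_as_quintic_A, quintic_deriv1]
    ring
  rw [h, quintic_deriv1]
  ring

/-- Key algebraic lemma: at any point `(A, 1)` with `A > 0` lying on the
critical curve `10A² + 3Ac₃ + c₁ = 0`, and with `9c₃² − 40c₁ > 0`, the
nondegeneracy conditions of an isola singularity hold. -/
lemma key_nondegeneracy (F c1 c3 A : ℝ) (hA : 0 < A)
    (hd : 0 < 9*c3^2 - 40*c1) (hq : 10*A^2 + 3*A*c3 + c1 = 0) :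
    gAA A 1 F c1 c3 ≠ 0 ∧ 0 < detHess A 1 F c1 c3 := by
  have hAA : gAA A 1 F c1 c3 = 2*A*(9*c3^2 - 40*c1) := by
    rw [gAA_eq]
    linear_combination (200*A + 12*c3) * hq
  have hAΩ : gAΩ A 1 F c1 c3 = 2*A^2*(9*c3^2 - 40*c1) := by
    rw [gAΩ_eq]
    linear_combination (c1 + 250*A^2 + 21*A*c3) * hq
  have hΩΩ : gΩΩ A 1 F c1 c3 = 2*A^3*(9*c3^2 - 40*c1) + 2*A := by
    rw [gΩΩ_eq]
    linear_combination (A^2*(200*A + 12*c3)) * hq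
  have hdet : detHess A 1 F c1 c3 = 4*A^2*(9*c3^2 - 40*c1) := by
    unfold detHess
    rw [hAA, hAΩ, hΩΩ]
    ring
  constructor
  · rw [hAA]
    positivity
  · rw [hdet]
    positivity

/-- for `c₃ < c₃₁ = −(2/3)√(10c₁)` the points `S₁`, `S₂`
satisfy the nondegeneracy conditions of isola singularities:
`∂²g/∂A² ≠ 0` and `det(d²g) > 0`. -/
theorem S1_S2_isola_nondegeneracy (c1 c3 : ℝ) (hc1 : 0 < c1)
    (hc3 : c3 < -(2 / 3) * Real.sqrt (10 * c1))
    (A1 A2 : ℝ)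
    (hA1 : A1 = (-3 * c3 - Real.sqrt (9 * c3 ^ 2 - 40 * c1)) / 20)
    (hA2 : A2 = (-3 * c3 + Real.sqrt (9 * c3 ^ 2 - 40 * c1)) / 20) :
    ∀ F : ℝ,
      (gAA A1 1 F c1 c3 ≠ 0 ∧ 0 < detHess A1 1 F c1 c3) ∧
      (gAA A2 1 F c1 c3 ≠ 0 ∧ 0 < detHess A2 1 F c1 c3) := by
  intro F
  set t := Real.sqrt (10 * c1) with ht
  have ht0 : 0 ≤ t := Real.sqrt_nonneg _
  have ht2 : t ^ 2 = 10 * c1 := Real.sq_sqrt (by linarith)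
  have hc3neg : c3 < 0 := by nlinarith
  have hd : 0 < 9 * c3 ^ 2 - 40 * c1 := by nlinarith
  set s := Real.sqrt (9 * c3 ^ 2 - 40 * c1) with hs
  have hs0 : 0 ≤ s := Real.sqrt_nonneg _
  have hs2 : s ^ 2 = 9 * c3 ^ 2 - 40 * c1 := Real.sq_sqrt hd.le
  have hslt : s < -3 * c3 := by nlinarith
  have hA1pos : 0 < A1 := by rw [hA1]; nlinarith
  have hA2pos : 0 < A2 := by rw [hA2]; nlinarith
  have hq1 : 10 * A1 ^ 2 + 3 * A1 * c3 + c1 = 0 := by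
    rw [hA1]; linear_combination hs2 / 40
  have hq2 : 10 * A2 ^ 2 + 3 * A2 * c3 + c1 = 0 := by
    rw [hA2]; linear_combination hs2 / 40
  exact ⟨key_nondegeneracy F c1 c3 A1 hA1pos hd hq1,
         key_nondegeneracy F c1 c3 A2 hA2pos hd hq2⟩
end

section
/- Let c₁ > 0 and set A₄ = (−9c₃ + √(81c₃² − 200c₁))/100, c₃₁ = −(2/3)·√(10c₁), c₃₂ = −(10/9)·√(2c₁). At the point (A, Ω) = (A₄, 1): (i) if c₃₁ < c₃ < c₃₂ then det(d²g) > 0 and ∂²g/∂A² ≠ 0 (S₄ is an isola singularity); (ii) if c₃ < c₃₁ then det(d²g) < 0 and ∂²g/∂A² ≠ 0 (S₄ is a simple bifurcation); (iii) if c₃ = c₃₁ or c₃ = c₃₂ then det(d²g) = 0. Here det(d²g) = (∂²g/∂A²)(∂²g/∂Ω²) − (∂²g/∂A∂Ω)². -/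
lemma hasDerivAt_quintic (a b c d e k x : ℝ) :
    HasDerivAt (fun x : ℝ => a * x ^ 5 + b * x ^ 4 + c * x ^ 3 + d * x ^ 2 + e * x + k)
      (5 * a * x ^ 4 + 4 * b * x ^ 3 + 3 * c * x ^ 2 + 2 * d * x + e) x := by
  have h := (((((((hasDerivAt_pow 5 x).const_mul a).add
      ((hasDerivAt_pow 4 x).const_mul b)).add
      ((hasDerivAt_pow 3 x).const_mul c)).add
      ((hasDerivAt_pow 2 x).const_mul d)).add
      ((hasDerivAt_id x).const_mul e)).add_const k)
  refine h.congr_deriv ?_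
  push_cast
  ring

lemma deriv_quintic (a b c d e k : ℝ) :
    deriv (fun x : ℝ => a * x ^ 5 + b * x ^ 4 + c * x ^ 3 + d * x ^ 2 + e * x + k)
      = fun x => 5 * a * x ^ 4 + 4 * b * x ^ 3 + 3 * c * x ^ 2 + 2 * d * x + e := by
  funext x
  exact (hasDerivAt_quintic a b c d e k x).deriv

lemma gAA_val (A0 Ω0 F c1 c3 : ℝ) :
    gAA A0 Ω0 F c1 c3 = 2000 * A0 ^ 3 * Ω0 ^ 5 + 720 * A0 ^ 2 * c3 * Ω0 ^ 4
      + 6 * A0 * Ω0 ^ 3 * (20 * c1 + 9 * c3 ^ 2) + 12 * c1 * c3 * Ω0 ^ 2 := by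
  have h1 : (fun A => g A Ω0 F c1 c3)
      = fun x : ℝ => (100 * Ω0 ^ 5) * x ^ 5 + (60 * c3 * Ω0 ^ 4) * x ^ 4
        + (Ω0 ^ 3 * (20 * c1 + 9 * c3 ^ 2)) * x ^ 3 + (6 * c1 * c3 * Ω0 ^ 2) * x ^ 2
        + ((c1 ^ 2 - 2) * Ω0 + Ω0 ^ 2 + 1) * x + (-F) := by
    funext x; simp only [g]; ring
  have h2 : (fun x : ℝ => 5 * (100 * Ω0 ^ 5) * x ^ 4 + 4 * (60 * c3 * Ω0 ^ 4) * x ^ 3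
        + 3 * (Ω0 ^ 3 * (20 * c1 + 9 * c3 ^ 2)) * x ^ 2 + 2 * (6 * c1 * c3 * Ω0 ^ 2) * x
        + ((c1 ^ 2 - 2) * Ω0 + Ω0 ^ 2 + 1))
      = fun x : ℝ => (0:ℝ) * x ^ 5 + (500 * Ω0 ^ 5) * x ^ 4 + (240 * c3 * Ω0 ^ 4) * x ^ 3
        + (3 * Ω0 ^ 3 * (20 * c1 + 9 * c3 ^ 2)) * x ^ 2 + (12 * c1 * c3 * Ω0 ^ 2) * x
        + ((c1 ^ 2 - 2) * Ω0 + Ω0 ^ 2 + 1) := by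
    funext x; ring
  rw [gAA, h1, deriv_quintic, h2, deriv_quintic]
  ring

lemma gΩΩ_val (A0 Ω0 F c1 c3 : ℝ) :
    gΩΩ A0 Ω0 F c1 c3 = 2000 * A0 ^ 5 * Ω0 ^ 3 + 720 * A0 ^ 4 * c3 * Ω0 ^ 2
      + 6 * A0 ^ 3 * Ω0 * (20 * c1 + 9 * c3 ^ 2) + 12 * A0 ^ 2 * c1 * c3 + 2 * A0 := by
  have h1 : (fun Ω => g A0 Ω F c1 c3)
      = fun x : ℝ => (100 * A0 ^ 5) * x ^ 5 + (60 * A0 ^ 4 * c3) * x ^ 4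
        + (A0 ^ 3 * (20 * c1 + 9 * c3 ^ 2)) * x ^ 3 + (6 * A0 ^ 2 * c1 * c3 + A0) * x ^ 2
        + (A0 * (c1 ^ 2 - 2)) * x + (A0 - F) := by
    funext x; simp only [g]; ring
  have h2 : (fun x : ℝ => 5 * (100 * A0 ^ 5) * x ^ 4 + 4 * (60 * A0 ^ 4 * c3) * x ^ 3
        + 3 * (A0 ^ 3 * (20 * c1 + 9 * c3 ^ 2)) * x ^ 2 + 2 * (6 * A0 ^ 2 * c1 * c3 + A0) * x
        + A0 * (c1 ^ 2 - 2))
      = fun x : ℝ => (0:ℝ) * x ^ 5 + (500 * A0 ^ 5) * x ^ 4 + (240 * A0 ^ 4 * c3) * x ^ 3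
        + (3 * A0 ^ 3 * (20 * c1 + 9 * c3 ^ 2)) * x ^ 2 + (12 * A0 ^ 2 * c1 * c3 + 2 * A0) * x
        + A0 * (c1 ^ 2 - 2) := by
    funext x; ring
  rw [gΩΩ, h1, deriv_quintic, h2, deriv_quintic]
  ring

lemma gAΩ_val (A0 Ω0 F c1 c3 : ℝ) :
    gAΩ A0 Ω0 F c1 c3 = 2500 * A0 ^ 4 * Ω0 ^ 4 + 960 * A0 ^ 3 * c3 * Ω0 ^ 3
      + 9 * A0 ^ 2 * Ω0 ^ 2 * (20 * c1 + 9 * c3 ^ 2) + 24 * A0 * c1 * c3 * Ω0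
      + (c1 ^ 2 - 2) + 2 * Ω0 := by
  have h0 : (fun Ω => deriv (fun A => g A Ω F c1 c3) A0)
      = fun x : ℝ => (500 * A0 ^ 4) * x ^ 5 + (240 * A0 ^ 3 * c3) * x ^ 4
        + (3 * A0 ^ 2 * (20 * c1 + 9 * c3 ^ 2)) * x ^ 3 + (12 * A0 * c1 * c3 + 1) * x ^ 2
        + (c1 ^ 2 - 2) * x + 1 := by
    funext Ω
    have h1 : (fun A => g A Ω F c1 c3)
        = fun x : ℝ => (100 * Ω ^ 5) * x ^ 5 + (60 * c3 * Ω ^ 4) * x ^ 4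
          + (Ω ^ 3 * (20 * c1 + 9 * c3 ^ 2)) * x ^ 3 + (6 * c1 * c3 * Ω ^ 2) * x ^ 2
          + ((c1 ^ 2 - 2) * Ω + Ω ^ 2 + 1) * x + (-F) := by
      funext x; simp only [g]; ring
    rw [h1, deriv_quintic]
    ring
  rw [gAΩ, h0, deriv_quintic]
  ring

lemma S4_key (c1 c3 s A4 F : ℝ) (hA : A4 = (-9 * c3 + s) / 100)
    (hsq : s ^ 2 = 81 * c3 ^ 2 - 200 * c1) :
    gAA A4 1 F c1 c3 = -(s / 250) * ((s - 9 * c3) * (s + 6 * c3)) ∧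
    detHess A4 1 F c1 c3 = -(s / 12500) * ((s + 6 * c3) * (s - 9 * c3) ^ 2) := by
  have hc1 : c1 = (81 * c3 ^ 2 - s ^ 2) / 200 := by linarith
  subst hA
  constructor
  · rw [gAA_val, hc1]; ring
  · rw [detHess, gAA_val, gΩΩ_val, gAΩ_val, hc1]; ring

/-- nature of the singular point `S₄` at `(A₄, 1)`:
an isola for `c₃₁ < c₃ < c₃₂`, a simple bifurcation for `c₃ < c₃₁`, and
degenerate (`det(d²g) = 0`) at `c₃ = c₃₁` or `c₃ = c₃₂`. -/
theorem S4_classification (c1 c3 : ℝ) (hc1 : 0 < c1)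
    (A4 c31 c32 : ℝ)
    (hA4 : A4 = (-9 * c3 + Real.sqrt (81 * c3 ^ 2 - 200 * c1)) / 100)
    (hc31 : c31 = -(2 / 3) * Real.sqrt (10 * c1))
    (hc32 : c32 = -(10 / 9) * Real.sqrt (2 * c1)) :
    ∀ F : ℝ,
      (c31 < c3 → c3 < c32 →
        0 < detHess A4 1 F c1 c3 ∧ gAA A4 1 F c1 c3 ≠ 0) ∧
      (c3 < c31 →
        detHess A4 1 F c1 c3 < 0 ∧ gAA A4 1 F c1 c3 ≠ 0) ∧
      (c3 = c31 ∨ c3 = c32 → detHess A4 1 F c1 c3 = 0) := by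
  intro F
  set s := Real.sqrt (81 * c3 ^ 2 - 200 * c1) with hs
  have hsnn : 0 ≤ s := by rw [hs]; exact Real.sqrt_nonneg _
  have s10 : 0 < Real.sqrt (10 * c1) := Real.sqrt_pos.mpr (by linarith)
  have s2 : 0 < Real.sqrt (2 * c1) := Real.sqrt_pos.mpr (by linarith)
  have hc31sq : c31 ^ 2 = 40 * c1 / 9 := by
    rw [hc31, mul_pow, Real.sq_sqrt (by linarith : (0:ℝ) ≤ 10 * c1)]; ring
  have hc32sq : c32 ^ 2 = 200 * c1 / 81 := by
    rw [hc32, mul_pow, Real.sq_sqrt (by linarith : (0:ℝ) ≤ 2 * c1)]; ring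
  have hc31neg : c31 < 0 := by rw [hc31]; nlinarith [s10]
  have hc32neg : c32 < 0 := by rw [hc32]; nlinarith [s2]
  refine ⟨?_, ?_, ?_⟩
  · -- isola case
    intro h1 h2
    have hc3neg : c3 < 0 := lt_trans h2 hc32neg
    have hgt : c3 ^ 2 > 200 * c1 / 81 := by nlinarith
    have hlt : c3 ^ 2 < 40 * c1 / 9 := by nlinarith
    have hdpos : 0 < 81 * c3 ^ 2 - 200 * c1 := by nlinarith
    have hsq : s ^ 2 = 81 * c3 ^ 2 - 200 * c1 := by
      rw [hs]; exact Real.sq_sqrt (le_of_lt hdpos)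
    have hspos : 0 < s := by rw [hs]; exact Real.sqrt_pos.mpr hdpos
    obtain ⟨hG, hD⟩ := S4_key c1 c3 s A4 F hA4 hsq
    have h6 : s + 6 * c3 < 0 := by nlinarith
    have h9 : 0 < s - 9 * c3 := by linarith
    constructor
    · rw [hD]
      have : -(s / 12500) * ((s + 6 * c3) * (s - 9 * c3) ^ 2)
          = (s / 12500) * (-(s + 6 * c3)) * (s - 9 * c3) ^ 2 := by ring
      rw [this]
      exact mul_pos (mul_pos (by positivity) (by linarith)) (pow_pos h9 2)
    · rw [hG]
      have : -(s / 250) * ((s - 9 * c3) * (s + 6 * c3))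
          = (s / 250) * (s - 9 * c3) * (-(s + 6 * c3)) := by ring
      rw [this]
      exact ne_of_gt (mul_pos (mul_pos (by positivity) h9) (by linarith))
  · -- simple bifurcation case
    intro h1
    have hc3neg : c3 < 0 := lt_trans h1 hc31neg
    have hgt : c3 ^ 2 > 40 * c1 / 9 := by nlinarith
    have hdpos : 0 < 81 * c3 ^ 2 - 200 * c1 := by nlinarith
    have hsq : s ^ 2 = 81 * c3 ^ 2 - 200 * c1 := by
      rw [hs]; exact Real.sq_sqrt (le_of_lt hdpos)
    have hspos : 0 < s := by rw [hs]; exact Real.sqrt_pos.mpr hdpos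
    obtain ⟨hG, hD⟩ := S4_key c1 c3 s A4 F hA4 hsq
    have h6 : 0 < s + 6 * c3 := by nlinarith
    have h9 : 0 < s - 9 * c3 := by linarith
    constructor
    · rw [hD]
      have : -(s / 12500) * ((s + 6 * c3) * (s - 9 * c3) ^ 2)
          = -((s / 12500) * (s + 6 * c3) * (s - 9 * c3) ^ 2) := by ring
      rw [this]
      exact neg_neg_iff_pos.mpr (mul_pos (mul_pos (by positivity) h6) (pow_pos h9 2)) |>.le.lt_of_ne (by
        exact ne_of_lt (neg_neg_iff_pos.mpr (mul_pos (mul_pos (by positivity) h6) (pow_pos h9 2))))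
    · rw [hG]
      have : -(s / 250) * ((s - 9 * c3) * (s + 6 * c3))
          = -((s / 250) * (s - 9 * c3) * (s + 6 * c3)) := by ring
      rw [this]
      exact ne_of_lt (neg_neg_iff_pos.mpr (mul_pos (mul_pos (by positivity) h9) h6))
  · -- degenerate case
    rintro (rfl | rfl)
    · -- c3 = c31
      have hd : 81 * c3 ^ 2 - 200 * c1 = 160 * c1 := by rw [hc31sq]; ring
      have hsq : s ^ 2 = 81 * c3 ^ 2 - 200 * c1 := by
        rw [hs]; exact Real.sq_sqrt (by rw [hd]; linarith)
      obtain ⟨hG, hD⟩ := S4_key c1 c3 s A4 F hA4 hsq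
      have hfac : (s + 6 * c3) * (s - 6 * c3) = 0 := by
        linear_combination hsq + 45 * hc31sq
      rcases mul_eq_zero.mp hfac with h | h
      · rw [hD, h]; ring
      · exact absurd h (by intro h'; linarith)
    · -- c3 = c32
      have hd : 81 * c3 ^ 2 - 200 * c1 = 0 := by rw [hc32sq]; ring
      have hs0 : s = 0 := by rw [hs, hd, Real.sqrt_zero]
      have hsq : s ^ 2 = 81 * c3 ^ 2 - 200 * c1 := by rw [hs0, hd]; ring
      obtain ⟨hG, hD⟩ := S4_key c1 c3 s A4 F hA4 hsq
      rw [hD, hs0]; ring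
end

section
/- Let c₁ > 0 and c₃ be real, and define the averaged damping f_d(x₀) = c₁x₀ + (3/4)c₃x₀³ + (5/8)x₀⁵. For x₀ > 0, f_d(x₀) = 0 if and only if 9c₃² ≥ 40c₁ and x₀² ∈ {4A₁, 4A₂}, where A₁ = (−3c₃ − √(9c₃² − 40c₁))/20 and A₂ = (−3c₃ + √(9c₃² − 40c₁))/20; i.e., the nontrivial zeros of the averaged damping curve occur exactly at the amplitudes x₀ = 2√A₁ and x₀ = 2√A₂ of the zero-forcing isola singularities S₁ and S₂. -/
/-- the nontrivial zeros of the averaged damping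
`f_d(x₀) = c₁x₀ + (3/4)c₃x₀³ + (5/8)x₀⁵` occur exactly at the amplitudes
`x₀ = 2√A₁`, `x₀ = 2√A₂` of the zero-forcing isola singularities `S₁`, `S₂`. -/
theorem averaged_damping_zeros (c1 c3 : ℝ) (hc1 : 0 < c1) :
    ∀ x0 : ℝ, 0 < x0 →
      (c1 * x0 + (3 / 4) * c3 * x0 ^ 3 + (5 / 8) * x0 ^ 5 = 0 ↔
        9 * c3 ^ 2 ≥ 40 * c1 ∧
          (x0 ^ 2 = 4 * ((-3 * c3 - Real.sqrt (9 * c3 ^ 2 - 40 * c1)) / 20) ∨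
           x0 ^ 2 = 4 * ((-3 * c3 + Real.sqrt (9 * c3 ^ 2 - 40 * c1)) / 20))) := by
  intro x0 hx0
  constructor
  · intro h
    have hx0' : x0 ≠ 0 := ne_of_gt hx0
    have hfac : x0 * (c1 + (3 / 4) * c3 * x0 ^ 2 + (5 / 8) * x0 ^ 4) = 0 := by
      linear_combination h
    have h2 : c1 + (3 / 4) * c3 * x0 ^ 2 + (5 / 8) * x0 ^ 4 = 0 := by
      rcases mul_eq_zero.mp hfac with h' | h'
      · exact absurd h' hx0'
      · exact h'
    have hD : 9 * c3 ^ 2 - 40 * c1 = (5 * x0 ^ 2 + 3 * c3) ^ 2 := by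
      linear_combination (-40 : ℝ) * h2
    have hdisc : 9 * c3 ^ 2 ≥ 40 * c1 := by nlinarith [sq_nonneg (5 * x0 ^ 2 + 3 * c3)]
    refine ⟨hdisc, ?_⟩
    have hs : Real.sqrt (9 * c3 ^ 2 - 40 * c1) = |5 * x0 ^ 2 + 3 * c3| := by
      rw [hD, Real.sqrt_sq_eq_abs]
    rcases le_or_gt 0 (5 * x0 ^ 2 + 3 * c3) with hsg | hsg
    · right
      rw [hs, abs_of_nonneg hsg]; ring
    · left
      rw [hs, abs_of_neg hsg]; ring
  · rintro ⟨hdisc, hy | hy⟩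
    · have hs : Real.sqrt (9 * c3 ^ 2 - 40 * c1) ^ 2 = 9 * c3 ^ 2 - 40 * c1 :=
        Real.sq_sqrt (by linarith)
      linear_combination (x0 / 40) * hs +
        (x0 / 8 * (5 * x0 ^ 2 + 3 * c3 - Real.sqrt (9 * c3 ^ 2 - 40 * c1))) * hy
    · have hs : Real.sqrt (9 * c3 ^ 2 - 40 * c1) ^ 2 = 9 * c3 ^ 2 - 40 * c1 :=
        Real.sq_sqrt (by linarith)
      linear_combination (x0 / 40) * hs +
        (x0 / 8 * (5 * x0 ^ 2 + 3 * c3 + Real.sqrt (9 * c3 ^ 2 - 40 * c1))) * hy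
end

section
/- Let c₁ > 0 and c₃ > c₃₂ = −(10/9)·√(2c₁). Then there is no A > 0 with ∂g/∂A(A, 1, F, c₁, c₃) = 0 (for any F); consequently the harmonic-balance frequency response predicts no isola or simple-bifurcation singularity with positive amplitude at Ω = 1 in this parameter region. -/
lemma gderiv (A F c1 c3 : ℝ) :
    deriv (fun A' => g A' 1 F c1 c3) A =
      500 * A ^ 4 + 240 * c3 * A ^ 3 + (60 * c1 + 27 * c3 ^ 2) * A ^ 2
        + 12 * c1 * c3 * A + c1 ^ 2 := by
  have h : (fun A' => g A' 1 F c1 c3) = fun A' : ℝ =>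
      100 * A' ^ 5 + 60 * c3 * A' ^ 4 + (20 * c1 + 9 * c3 ^ 2) * A' ^ 3
        + 6 * c1 * c3 * A' ^ 2 + c1 ^ 2 * A' - F := by
    funext A'; simp [g]; ring
  rw [h]
  have hd : HasDerivAt (fun A' : ℝ =>
      100 * A' ^ 5 + 60 * c3 * A' ^ 4 + (20 * c1 + 9 * c3 ^ 2) * A' ^ 3
        + 6 * c1 * c3 * A' ^ 2 + c1 ^ 2 * A' - F)
      (500 * A ^ 4 + 240 * c3 * A ^ 3 + (60 * c1 + 27 * c3 ^ 2) * A ^ 2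
        + 12 * c1 * c3 * A + c1 ^ 2) A := by
    have h5 := (hasDerivAt_pow 5 A).const_mul (100 : ℝ)
    have h4 := (hasDerivAt_pow 4 A).const_mul (60 * c3)
    have h3 := (hasDerivAt_pow 3 A).const_mul (20 * c1 + 9 * c3 ^ 2)
    have h2 := (hasDerivAt_pow 2 A).const_mul (6 * c1 * c3)
    have h1 := (hasDerivAt_id A).const_mul (c1 ^ 2)
    have := ((((h5.add h4).add h3).add h2).add h1).sub_const F
    convert this using 1
    · rfl
    · rfl
    · funext x; simp only [Pi.add_apply, id]
    · push_cast
      ring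
  exact hd.deriv

/-- for `c₃ > c₃₂ = −(10/9)√(2c₁)` there is no positive
amplitude `A` with `∂g/∂A(A, 1, F, c₁, c₃) = 0` for any `F`; hence no isola or
simple-bifurcation singularity with positive amplitude at `Ω = 1`. -/
theorem no_singularity_above_threshold (c1 c3 : ℝ) (hc1 : 0 < c1)
    (hc3 : c3 > -(10 / 9) * Real.sqrt (2 * c1)) :
    ¬ ∃ A : ℝ, 0 < A ∧ ∃ F : ℝ, deriv (fun A' => g A' 1 F c1 c3) A = 0 := by
  rintro ⟨A, hA, F, hF⟩
  rw [gderiv] at hF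
  set u := Real.sqrt (2 * c1) with hu
  have hu0 : 0 < u := Real.sqrt_pos.mpr (by linarith)
  have hu2 : u ^ 2 = 2 * c1 := Real.sq_sqrt (by linarith)
  have hh : 0 < 9 * c3 + 10 * u := by nlinarith
  -- certificate: 12·P = (10A−u)²(60A²−20uA+3u²) + 8(9c3+10u)A(40A²−10uA+u²) + 4(9c3+10u)²A²
  nlinarith [sq_nonneg (10 * A - u), sq_nonneg (10 * A - 2 * u), sq_nonneg A,
    mul_pos hh hA, sq_nonneg ((9 * c3 + 10 * u) * A),
    mul_pos (mul_pos hh hA) hA,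
    mul_nonneg (sq_nonneg (10 * A - u)) (sq_nonneg (10 * A - 2 * u)),
    mul_nonneg (mul_nonneg (sq_nonneg (10 * A - u)) hu0.le) hu0.le,
    mul_nonneg (mul_pos (mul_pos hh hA) hA).le hA.le,
    mul_nonneg (mul_pos hh hA).le (sq_nonneg (8 * A - u)),
    mul_nonneg (mul_pos hh hA).le (sq_nonneg u),
    mul_nonneg (sq_nonneg (10 * A - u)) (sq_nonneg (10 * A - 3 * u)),
    mul_nonneg (sq_nonneg (10 * A - u)) (sq_nonneg A)]
end
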